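/- arXiv:2308.04287 — 2 statements merged into one kernel-verified Lean document; each statement's English description precedes it below -/
import Mathlib

section
/- Let A be an n×n real matrix, C a p×n real matrix, Q an n×n real positive-semidefinite matrix, and R a p×p real positive-definite matrix. Suppose Σ is an n×n real positive-semidefinite matrix satisfying the prediction algebraic Riccati equation Σ = AΣAᵀ + Q − AΣCᵀ(CΣCᵀ + R)⁻¹CΣAᵀ, and set L = AΣCᵀ(CΣCᵀ + R)⁻¹. Then for every nonzero z ∈ ℂ such that zI − A and z⁻¹I − Aᵀ are invertible (matrices regarded as complex), the Return Difference Equality holds: R + C(zI − A)⁻¹ Q (z⁻¹I − Aᵀ)⁻¹ Cᵀ = (I + C(zI − A)⁻¹L)(CΣCᵀ + R)(I + Lᵀ(z⁻¹I − Aᵀ)⁻¹Cᵀ). -/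
open Matrix

private lemma mapRC_add {q r : ℕ} (X Y : Matrix (Fin q) (Fin r) ℝ) :
    (X + Y).map (algebraMap ℝ ℂ) = X.map (algebraMap ℝ ℂ) + Y.map (algebraMap ℝ ℂ) :=
  Matrix.map_add _ (fun a b => map_add _ a b) X Y

private lemma mapRC_sub {q r : ℕ} (X Y : Matrix (Fin q) (Fin r) ℝ) :
    (X - Y).map (algebraMap ℝ ℂ) = X.map (algebraMap ℝ ℂ) - Y.map (algebraMap ℝ ℂ) :=
  Matrix.map_sub _ (fun a b => map_sub _ a b) X Y

private theorem rde_complex {n p : ℕ}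
    (Ac Sc Qc : Matrix (Fin n) (Fin n) ℂ) (Cc : Matrix (Fin p) (Fin n) ℂ)
    (Rc Vc : Matrix (Fin p) (Fin p) ℂ) (Lc : Matrix (Fin n) (Fin p) ℂ)
    (z : ℂ) (hz : z ≠ 0)
    (h1 : IsUnit (z • (1 : Matrix (Fin n) (Fin n) ℂ) - Ac))
    (h2 : IsUnit (z⁻¹ • (1 : Matrix (Fin n) (Fin n) ℂ) - Acᵀ))
    (hQ : Qc = Sc - Ac * Sc * Acᵀ + Lc * Vc * Lcᵀ)
    (hLV : Lc * Vc = Ac * Sc * Ccᵀ)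
    (hVL : Vc * Lcᵀ = Cc * Sc * Acᵀ)
    (hV : Vc = Cc * Sc * Ccᵀ + Rc) :
    Rc + Cc * (z • (1 : Matrix (Fin n) (Fin n) ℂ) - Ac)⁻¹ * Qc *
        (z⁻¹ • (1 : Matrix (Fin n) (Fin n) ℂ) - Acᵀ)⁻¹ * Ccᵀ =
    (1 + Cc * (z • (1 : Matrix (Fin n) (Fin n) ℂ) - Ac)⁻¹ * Lc) * Vc *
      (1 + Lcᵀ * (z⁻¹ • (1 : Matrix (Fin n) (Fin n) ℂ) - Acᵀ)⁻¹ * Ccᵀ) := by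
  set M := z • (1 : Matrix (Fin n) (Fin n) ℂ) - Ac with hMdef
  set N := z⁻¹ • (1 : Matrix (Fin n) (Fin n) ℂ) - Acᵀ with hNdef
  have hMd : IsUnit M.det := (Matrix.isUnit_iff_isUnit_det M).mp h1
  have hNd : IsUnit N.det := (Matrix.isUnit_iff_isUnit_det N).mp h2
  have hdec : Qc = M * Sc * N + M * Sc * Acᵀ + Ac * Sc * N + Lc * Vc * Lcᵀ := by
    rw [hQ, hMdef, hNdef]
    simp only [sub_mul, mul_sub, smul_mul_assoc, mul_smul_comm, one_mul, mul_one,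
      smul_smul, mul_inv_cancel₀ hz, inv_mul_cancel₀ hz, one_smul, smul_sub]
    abel
  have c1 : ∀ (B : Matrix (Fin n) (Fin p) ℂ), M⁻¹ * (M * B) = B :=
    fun B => Matrix.nonsing_inv_mul_cancel_left M B hMd
  have c2 : ∀ (B : Matrix (Fin n) (Fin p) ℂ), N * (N⁻¹ * B) = B :=
    fun B => Matrix.mul_nonsing_inv_cancel_left N B hNd
  have hVL' : ∀ (X : Matrix (Fin n) (Fin p) ℂ), Vc * (Lcᵀ * X) = Cc * (Sc * (Acᵀ * X)) := by
    intro X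
    rw [← Matrix.mul_assoc, hVL, Matrix.mul_assoc, Matrix.mul_assoc]
  have hdec2 : Qc = M * Sc * N + M * Sc * Acᵀ + Ac * Sc * N + Ac * Sc * Ccᵀ * Lcᵀ := by
    rw [hdec, ← hLV]
  have hfac : (1 + Cc * M⁻¹ * Lc) * Vc = Vc + Cc * M⁻¹ * (Ac * Sc * Ccᵀ) := by
    rw [Matrix.add_mul, Matrix.one_mul, Matrix.mul_assoc, hLV]
  rw [hdec2, hfac]
  simp only [Matrix.mul_add, Matrix.add_mul, Matrix.one_mul, Matrix.mul_one, Matrix.mul_assoc,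
    c1, c2, hVL']
  rw [hV]
  simp only [Matrix.mul_assoc]
  abel


/-- The Return Difference Equality for steady-state Kalman filtering.
If `Σ ⪰ 0` solves the prediction algebraic Riccati equation
`Σ = AΣAᵀ + Q − AΣCᵀ(CΣCᵀ + R)⁻¹CΣAᵀ` with `Q ⪰ 0`, `R ≻ 0`, and
`L = AΣCᵀ(CΣCᵀ + R)⁻¹`, then for every nonzero `z ∈ ℂ` with `zI − A` and `z⁻¹I − Aᵀ`
invertible (over ℂ),
`R + C(zI − A)⁻¹ Q (z⁻¹I − Aᵀ)⁻¹ Cᵀ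
  = (I + C(zI − A)⁻¹L)(CΣCᵀ + R)(I + Lᵀ(z⁻¹I − Aᵀ)⁻¹Cᵀ)`. -/
theorem stmt6 (n p : ℕ)
    (A : Matrix (Fin n) (Fin n) ℝ) (C : Matrix (Fin p) (Fin n) ℝ)
    (Q : Matrix (Fin n) (Fin n) ℝ) (R : Matrix (Fin p) (Fin p) ℝ)
    (hQ : Q.PosSemidef) (hR : R.PosDef)
    (S : Matrix (Fin n) (Fin n) ℝ) (hS : S.PosSemidef)
    (hric : S = A * S * Aᵀ + Q - A * S * Cᵀ * (C * S * Cᵀ + R)⁻¹ * C * S * Aᵀ)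
    (L : Matrix (Fin n) (Fin p) ℝ) (hL : L = A * S * Cᵀ * (C * S * Cᵀ + R)⁻¹)
    (z : ℂ) (hz : z ≠ 0)
    (h1 : IsUnit (z • (1 : Matrix (Fin n) (Fin n) ℂ) - A.map (algebraMap ℝ ℂ)))
    (h2 : IsUnit (z⁻¹ • (1 : Matrix (Fin n) (Fin n) ℂ) - (Aᵀ).map (algebraMap ℝ ℂ))) :
    R.map (algebraMap ℝ ℂ) +
      C.map (algebraMap ℝ ℂ) *
        (z • (1 : Matrix (Fin n) (Fin n) ℂ) - A.map (algebraMap ℝ ℂ))⁻¹ *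
        Q.map (algebraMap ℝ ℂ) *
        (z⁻¹ • (1 : Matrix (Fin n) (Fin n) ℂ) - (Aᵀ).map (algebraMap ℝ ℂ))⁻¹ *
        (Cᵀ).map (algebraMap ℝ ℂ) =
    (1 + C.map (algebraMap ℝ ℂ) *
        (z • (1 : Matrix (Fin n) (Fin n) ℂ) - A.map (algebraMap ℝ ℂ))⁻¹ *
        L.map (algebraMap ℝ ℂ)) *
      (C * S * Cᵀ + R).map (algebraMap ℝ ℂ) *
    (1 + (Lᵀ).map (algebraMap ℝ ℂ) *
        (z⁻¹ • (1 : Matrix (Fin n) (Fin n) ℂ) - (Aᵀ).map (algebraMap ℝ ℂ))⁻¹ *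
        (Cᵀ).map (algebraMap ℝ ℂ)) := by
  set V : Matrix (Fin p) (Fin p) ℝ := C * S * Cᵀ + R with hVdef
  have hCSC : (C * S * Cᵀ).PosSemidef := by
    have h := hS.mul_mul_conjTranspose_same C
    rwa [Matrix.conjTranspose_eq_transpose_of_trivial] at h
  have hVpd : V.PosDef := Matrix.PosDef.posSemidef_add hCSC hR
  have hVd : IsUnit V.det := hVpd.det_pos.ne'.isUnit
  have hSt : Sᵀ = S := by
    rw [← Matrix.conjTranspose_eq_transpose_of_trivial]; exact hS.1
  have hRt : Rᵀ = R := by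
    rw [← Matrix.conjTranspose_eq_transpose_of_trivial]; exact hR.1
  have hVt : Vᵀ = V := by
    rw [hVdef]
    simp [Matrix.transpose_add, Matrix.transpose_mul, Matrix.transpose_transpose, hSt, hRt,
      Matrix.mul_assoc]
  have hLV_r : L * V = A * S * Cᵀ := by
    rw [hL]
    exact Matrix.nonsing_inv_mul_cancel_right V (A * S * Cᵀ) hVd
  have hLt : Lᵀ = V⁻¹ * (C * S * Aᵀ) := by
    rw [hL]
    simp [Matrix.transpose_mul, Matrix.transpose_nonsing_inv, hVt, hSt, Matrix.mul_assoc]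
  have hVL_r : V * Lᵀ = C * S * Aᵀ := by
    rw [hLt]
    exact Matrix.mul_nonsing_inv_cancel_left V (C * S * Aᵀ) hVd
  have hQ_r : Q = S - A * S * Aᵀ + L * V * Lᵀ := by
    have hX : L * V * Lᵀ = A * S * Cᵀ * V⁻¹ * C * S * Aᵀ := by
      rw [hLV_r, hLt]
      simp [Matrix.mul_assoc]
    rw [hX]
    nth_rewrite 1 [hric]
    abel
  -- complexify
  have hQc : Q.map (algebraMap ℝ ℂ) =
      S.map (algebraMap ℝ ℂ) -
        A.map (algebraMap ℝ ℂ) * S.map (algebraMap ℝ ℂ) * (A.map (algebraMap ℝ ℂ))ᵀ +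
        L.map (algebraMap ℝ ℂ) * V.map (algebraMap ℝ ℂ) * (L.map (algebraMap ℝ ℂ))ᵀ := by
    have h := congrArg (fun W : Matrix (Fin n) (Fin n) ℝ => W.map (algebraMap ℝ ℂ)) hQ_r
    simp only [mapRC_add, mapRC_sub, Matrix.map_mul, Matrix.transpose_map] at h; exact h
  have hLVc : L.map (algebraMap ℝ ℂ) * V.map (algebraMap ℝ ℂ) =
      A.map (algebraMap ℝ ℂ) * S.map (algebraMap ℝ ℂ) * (C.map (algebraMap ℝ ℂ))ᵀ := by
    have h := congrArg (fun W : Matrix (Fin n) (Fin p) ℝ => W.map (algebraMap ℝ ℂ)) hLV_r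
    simp only [Matrix.map_mul, Matrix.transpose_map] at h; exact h
  have hVLc : V.map (algebraMap ℝ ℂ) * (L.map (algebraMap ℝ ℂ))ᵀ =
      C.map (algebraMap ℝ ℂ) * S.map (algebraMap ℝ ℂ) * (A.map (algebraMap ℝ ℂ))ᵀ := by
    have h := congrArg (fun W : Matrix (Fin p) (Fin n) ℝ => W.map (algebraMap ℝ ℂ)) hVL_r
    simp only [Matrix.map_mul, Matrix.transpose_map] at h; exact h
  have hVc : V.map (algebraMap ℝ ℂ) =
      C.map (algebraMap ℝ ℂ) * S.map (algebraMap ℝ ℂ) * (C.map (algebraMap ℝ ℂ))ᵀ +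
        R.map (algebraMap ℝ ℂ) := by
    have h := congrArg (fun W : Matrix (Fin p) (Fin p) ℝ => W.map (algebraMap ℝ ℂ)) hVdef
    simp only [mapRC_add, Matrix.map_mul, Matrix.transpose_map] at h; exact h
  rw [Matrix.transpose_map, Matrix.transpose_map, Matrix.transpose_map] at *
  exact rde_complex (A.map (algebraMap ℝ ℂ)) (S.map (algebraMap ℝ ℂ)) (Q.map (algebraMap ℝ ℂ))
    (C.map (algebraMap ℝ ℂ)) (R.map (algebraMap ℝ ℂ)) (V.map (algebraMap ℝ ℂ))
    (L.map (algebraMap ℝ ℂ)) z hz h1 h2 hQc hLVc hVLc hVc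
end

section
/- Let ω₀ > 0 be real and let A (n×n), B (n×m), C (m×n), D (m×m) be real matrices with I + A invertible, and let H(z) = D + C(zI − A)⁻¹B (matrices over ℂ). Suppose H is inner in the sense that for every nonzero z ∈ ℂ such that both zI − A and z⁻¹I − A are invertible, H(z)·H(z⁻¹)ᵀ = I. Let (Ā, B̄, C̄, D̄) be the Tustin transform of (A, B, C, D) with parameter ω₀ and G(s) = D̄ + C̄(sI − Ā)⁻¹B̄. Then G is inner in the continuous-time sense: for every s ∈ ℂ with s ≠ ±ω₀ such that sI − Ā, −sI − Ā, zI − A and z⁻¹I − A are all invertible (where z = (ω₀ + s)/(ω₀ − s) ≠ 0), one has G(s)·G(−s)ᵀ = I. -/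
/-!
Put `z = (ω₀ + s) / (ω₀ - s)`. Then `sI - Ā = (ω₀ - s)(zI - A)(I + A)⁻¹`, and since
`1 + z = 2ω₀ / (ω₀ - s)`, the identity `N⁻¹ (N + P) P⁻¹ = N⁻¹ + P⁻¹` with `N = zI - A`,
`P = I + A` collapses `D̄ + C̄(sI - Ā)⁻¹B̄` to `D + C(zI - A)⁻¹B`, i.e. `G(s) = H(z)`.
As `s ↦ -s` corresponds to `z ↦ z⁻¹`, `G(s) G(-s)ᵀ = H(z) H(z⁻¹)ᵀ = I`.
-/

open Matrix

namespace Matrix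

variable {𝕜 : Type*} [Field 𝕜] {ι κ μ : Type*} [Fintype ι] [DecidableEq ι]

theorem nonsing_inv_mul_add_mul_nonsing_inv {N P : Matrix ι ι 𝕜} (hN : IsUnit N)
    (hP : IsUnit P) : N⁻¹ * (N + P) * P⁻¹ = N⁻¹ + P⁻¹ := by
  rw [isUnit_iff_isUnit_det] at hN hP
  rw [Matrix.mul_add, Matrix.add_mul, nonsing_inv_mul N hN, Matrix.mul_assoc,
    mul_nonsing_inv P hP, Matrix.one_mul, Matrix.mul_one, add_comm]

noncomputable def transferMatrix (a : Matrix ι ι 𝕜) (b : Matrix ι κ 𝕜) (c : Matrix μ ι 𝕜)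
    (d : Matrix μ κ 𝕜) (z : 𝕜) : Matrix μ κ 𝕜 :=
  d + c * (z • 1 - a)⁻¹ * b

variable {ω s : 𝕜} {a : Matrix ι ι 𝕜}

theorem tustin_resolvent (ha : IsUnit (1 + a)) (hs : ω - s ≠ 0)
    (hz : IsUnit (((ω + s) / (ω - s)) • 1 - a)) :
    (s • 1 - ω • ((a - 1) * (1 + a)⁻¹))⁻¹ =
      (ω - s)⁻¹ • ((1 + a) * (((ω + s) / (ω - s)) • 1 - a)⁻¹) := by
  set P := 1 + a
  set N := ((ω + s) / (ω - s)) • (1 : Matrix ι ι 𝕜) - a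
  rw [isUnit_iff_isUnit_det] at ha hz
  have hsub : s • 1 - ω • ((a - 1) * P⁻¹) = (ω - s) • (N * P⁻¹) := by
    have hNP : (ω - s) • N = s • P - ω • (a - 1) := by
      simp only [N, P, smul_sub, smul_smul, mul_div_cancel₀ _ hs]
      module
    rw [← Matrix.smul_mul (ω - s), hNP, Matrix.sub_mul (s • P), Matrix.smul_mul,
      Matrix.smul_mul, mul_nonsing_inv P ha]
  rw [hsub]
  refine inv_eq_left_inv ?_
  rw [Matrix.smul_mul, Matrix.mul_smul, smul_smul, inv_mul_cancel₀ hs, one_smul,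
    Matrix.mul_assoc, ← Matrix.mul_assoc N⁻¹, nonsing_inv_mul N hz, Matrix.one_mul,
    mul_nonsing_inv P ha]

theorem transferMatrix_tustin {k : 𝕜} (hk : k * k = 2 * ω) (b : Matrix ι κ 𝕜)
    (c : Matrix μ ι 𝕜) (d : Matrix μ κ 𝕜) (ha : IsUnit (1 + a)) (hs : ω - s ≠ 0)
    (hz : IsUnit (((ω + s) / (ω - s)) • 1 - a)) :
    transferMatrix (ω • ((a - 1) * (1 + a)⁻¹)) (k • ((1 + a)⁻¹ * b)) (k • (c * (1 + a)⁻¹))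
        (d - c * (1 + a)⁻¹ * b) s =
      transferMatrix a b c d ((ω + s) / (ω - s)) := by
  set P := 1 + a
  set N := ((ω + s) / (ω - s)) • (1 : Matrix ι ι 𝕜) - a
  have hNP : ((2 * ω) / (ω - s)) • (1 : Matrix ι ι 𝕜) = N + P := by
    have : 2 * ω / (ω - s) = (ω + s) / (ω - s) + 1 := by field_simp; ring
    rw [this, add_smul, one_smul]
    simp only [N, P]
    abel
  have hres : ((2 * ω) / (ω - s)) • (N⁻¹ * P⁻¹) = N⁻¹ + P⁻¹ := by
    rw [← nonsing_inv_mul_add_mul_nonsing_inv hz ha, ← hNP, Matrix.mul_smul, Matrix.mul_one,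
      Matrix.smul_mul]
  have hPP : P⁻¹ * P = 1 := nonsing_inv_mul P ((isUnit_iff_isUnit_det P).mp ha)
  unfold transferMatrix
  rw [tustin_resolvent ha hs hz]
  calc d - c * P⁻¹ * b + k • (c * P⁻¹) * ((ω - s)⁻¹ • (P * N⁻¹)) * k • (P⁻¹ * b)
      = d - c * P⁻¹ * b + c * (((2 * ω) / (ω - s)) • (N⁻¹ * P⁻¹)) * b := by
        rw [div_eq_mul_inv, ← hk]
        simp only [Matrix.smul_mul, Matrix.mul_smul, smul_smul, Matrix.mul_assoc]
        rw [← Matrix.mul_assoc P⁻¹ P, hPP, Matrix.one_mul]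
        ring_nf
    _ = d + c * N⁻¹ * b := by
        rw [hres, Matrix.mul_add, Matrix.add_mul]
        abel

end Matrix

/-- The Tustin transformation preserves innerness. If
`H(z) = D + C(zI − A)⁻¹B` (real matrices regarded over ℂ) satisfies
`H(z) H(z⁻¹)ᵀ = I` wherever defined, then the Tustin transform
`G(s) = D̄ + C̄(sI − Ā)⁻¹B̄` satisfies `G(s) G(−s)ᵀ = I` wherever defined. -/
theorem stmt10 (n m : ℕ) (ω₀ : ℝ) (hω : 0 < ω₀)
    (A : Matrix (Fin n) (Fin n) ℝ) (B : Matrix (Fin n) (Fin m) ℝ)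
    (C : Matrix (Fin m) (Fin n) ℝ) (D : Matrix (Fin m) (Fin m) ℝ)
    (hIA : IsUnit ((1 : Matrix (Fin n) (Fin n) ℝ) + A))
    (H : ℂ → Matrix (Fin m) (Fin m) ℂ)
    (hH : ∀ z : ℂ, H z = D.map (algebraMap ℝ ℂ) +
      C.map (algebraMap ℝ ℂ) *
        (z • (1 : Matrix (Fin n) (Fin n) ℂ) - A.map (algebraMap ℝ ℂ))⁻¹ *
        B.map (algebraMap ℝ ℂ))
    (hinner : ∀ z : ℂ, z ≠ 0 →
      IsUnit (z • (1 : Matrix (Fin n) (Fin n) ℂ) - A.map (algebraMap ℝ ℂ)) →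
      IsUnit (z⁻¹ • (1 : Matrix (Fin n) (Fin n) ℂ) - A.map (algebraMap ℝ ℂ)) →
      H z * (H z⁻¹)ᵀ = 1)
    (Abar : Matrix (Fin n) (Fin n) ℂ)
    (hAbar : Abar = (ω₀ : ℂ) •
      ((A.map (algebraMap ℝ ℂ) - 1) * (A.map (algebraMap ℝ ℂ) + 1)⁻¹))
    (Bbar : Matrix (Fin n) (Fin m) ℂ)
    (hBbar : Bbar = (Real.sqrt (2 * ω₀) : ℂ) •
      ((1 + A.map (algebraMap ℝ ℂ))⁻¹ * B.map (algebraMap ℝ ℂ)))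
    (Cbar : Matrix (Fin m) (Fin n) ℂ)
    (hCbar : Cbar = (Real.sqrt (2 * ω₀) : ℂ) •
      (C.map (algebraMap ℝ ℂ) * (1 + A.map (algebraMap ℝ ℂ))⁻¹))
    (Dbar : Matrix (Fin m) (Fin m) ℂ)
    (hDbar : Dbar = D.map (algebraMap ℝ ℂ) -
      C.map (algebraMap ℝ ℂ) * (1 + A.map (algebraMap ℝ ℂ))⁻¹ * B.map (algebraMap ℝ ℂ))
    (G : ℂ → Matrix (Fin m) (Fin m) ℂ)
    (hG : ∀ s : ℂ, G s =
      Dbar + Cbar * (s • (1 : Matrix (Fin n) (Fin n) ℂ) - Abar)⁻¹ * Bbar) :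
    ∀ s : ℂ, s ≠ (ω₀ : ℂ) → s ≠ -(ω₀ : ℂ) →
      IsUnit (s • (1 : Matrix (Fin n) (Fin n) ℂ) - Abar) →
      IsUnit ((-s) • (1 : Matrix (Fin n) (Fin n) ℂ) - Abar) →
      IsUnit ((((ω₀ : ℂ) + s) / ((ω₀ : ℂ) - s)) • (1 : Matrix (Fin n) (Fin n) ℂ) -
        A.map (algebraMap ℝ ℂ)) →
      IsUnit ((((ω₀ : ℂ) + s) / ((ω₀ : ℂ) - s))⁻¹ • (1 : Matrix (Fin n) (Fin n) ℂ) -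
        A.map (algebraMap ℝ ℂ)) →
      G s * (G (-s))ᵀ = 1 := by
  intro s hs hs' _ _ hz hz'
  set a := A.map (algebraMap ℝ ℂ)
  have ha : IsUnit (1 + a) := by
    simpa [a, Matrix.map_add] using hIA.map (algebraMap ℝ ℂ).mapMatrix
  have hk : (Real.sqrt (2 * ω₀) : ℂ) * Real.sqrt (2 * ω₀) = 2 * ω₀ := by
    exact_mod_cast Real.mul_self_sqrt (by positivity : (0 : ℝ) ≤ 2 * ω₀)
  have hGH (t : ℂ) (ht : (ω₀ : ℂ) - t ≠ 0) (htz : IsUnit (((ω₀ + t) / (ω₀ - t)) • 1 - a)) :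
      G t = H ((ω₀ + t) / (ω₀ - t)) := by
    rw [hG, hH, hAbar, hBbar, hCbar, hDbar, add_comm a 1]
    exact transferMatrix_tustin hk _ _ _ ha ht htz
  have hsub : (ω₀ : ℂ) - s ≠ 0 := sub_ne_zero.mpr hs.symm
  have hadd : (ω₀ : ℂ) + s ≠ 0 := fun h => hs' (eq_neg_of_add_eq_zero_right h)
  have hinv : ((ω₀ + s) / (ω₀ - s) : ℂ)⁻¹ = (ω₀ + -s) / (ω₀ - -s) := by
    rw [inv_div, sub_neg_eq_add, ← sub_eq_add_neg]
  rw [hGH s hsub hz, hGH (-s) (by rwa [sub_neg_eq_add]) (hinv ▸ hz'), ← hinv]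
  exact hinner _ (div_ne_zero hadd hsub) hz hz'
end
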